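/- Let G be a connected k-uniform hypergraph, u a vertex of G, and e_1,...,e_r edges of G not containing u, with v_i ∈ e_i. Let G' be obtained from G by moving the edges: e_i' = (e_i \ {v_i}) ∪ {u}. Let x be the principal eigenvector of Q(G) corresponding to q(G). If x_u ≥ max_{1≤i≤r} x_{v_i}, then q(G') > q(G). -/

import Mathlib

/-!
The principal eigenvector `x` of `Q(G)` attains `q(G) = qform G x`. Moving an edge from `v_i` to
`u` replaces the factor `x_{v_i}` by `x_u ≥ x_{v_i}` in its term, so `qform G' x ≥ q(G)`. Moreover
`u` gains edges, so `(Q(G') x^{k-1})_u > q(G) x_u^{k-1}`: `x` is not a critical point of the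
Rayleigh quotient of `G'`, and increasing `x_u` slightly and renormalising gives `q(G') > q(G)`.
-/

open scoped Classical BigOperators

namespace SLT

variable {V : Type*}

/-- A hypergraph (edge set over vertex type `V`) is `k`-uniform if every edge has exactly `k` vertices. -/
def IsUniform (k : ℕ) (E : Finset (Finset V)) : Prop :=
  ∀ e ∈ E, e.card = k

/-- The degree of a vertex: the number of edges containing it. -/
noncomputable def degree (E : Finset (Finset V)) (v : V) : ℕ :=
  (E.filter (fun e => v ∈ e)).card

/-- `Chains vs es` : the alternating sequence of vertices `vs` and edges `es` forms a
walk, i.e. consecutive vertices both lie in the corresponding edge. -/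
def Chains : List V → List (Finset V) → Prop
  | [_], [] => True
  | u :: v :: vs, e :: es => u ∈ e ∧ v ∈ e ∧ Chains (v :: vs) es
  | _, _ => False

/-- A path in a hypergraph: distinct vertices, distinct edges, all edges in `E`,
with consecutive vertices in the corresponding edge. -/
def IsPath (E : Finset (Finset V)) (vs : List V) (es : List (Finset V)) : Prop :=
  vs.Nodup ∧ es.Nodup ∧ (∀ e ∈ es, e ∈ E) ∧ Chains vs es

/-- A hypergraph is connected if any two vertices are joined by a path. -/
def HConnected (E : Finset (Finset V)) : Prop :=
  ∀ u v : V, ∃ vs es, IsPath E vs es ∧ vs.head? = some u ∧ vs.getLast? = some v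

/-- A cycle: at least two distinct edges, distinct vertices, closing up at the first vertex. -/
def IsCycle (E : Finset (Finset V)) (vs : List V) (es : List (Finset V)) : Prop :=
  2 ≤ es.length ∧ vs.Nodup ∧ es.Nodup ∧ (∀ e ∈ es, e ∈ E) ∧
  ∃ u, vs.head? = some u ∧ Chains (vs ++ [u]) es

/-- A `k`-uniform supertree: connected and acyclic `k`-uniform hypergraph. -/
def IsSupertree (k : ℕ) (E : Finset (Finset V)) : Prop :=
  IsUniform k E ∧ HConnected E ∧ ∀ vs es, ¬ IsCycle E vs es

/-- The quadratic form `x^T (Q(G) x^{k-1})` of the signless Laplacian tensor of a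
`k`-uniform hypergraph. -/
noncomputable def qform (k : ℕ) (E : Finset (Finset V)) (x : V → ℝ) : ℝ :=
  ∑ e ∈ E, ((∑ i ∈ e, x i ^ k) + k * ∏ i ∈ e, x i)

/-- The `i`-th component of `Q(G) x^{k-1}` for a `k`-uniform hypergraph. -/
noncomputable def Qcomp (k : ℕ) (E : Finset (Finset V)) (x : V → ℝ) (i : V) : ℝ :=
  ∑ e ∈ E.filter (fun e => i ∈ e), (x i ^ (k-1) + ∏ j ∈ e.erase i, x j)

/-- The signless Laplacian spectral radius `q(G)`, via Qi's variational characterization: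
the supremum of the quadratic form over nonnegative vectors with `∑ x_v^k = 1`. -/
noncomputable def qrad [Fintype V] (k : ℕ) (E : Finset (Finset V)) : ℝ :=
  sSup {r | ∃ x : V → ℝ, (∀ v, 0 ≤ x v) ∧ (∑ v, x v ^ k) = 1 ∧ r = qform k E x}

/-- `x` is the principal eigenvector of `Q(G)`: positive, unit (`∑ x_v^k = 1`), and an
eigenvector for the eigenvalue `q(G)`. -/
def IsPrincipalEig [Fintype V] (k : ℕ) (E : Finset (Finset V)) (x : V → ℝ) : Prop :=
  (∀ v, 0 < x v) ∧ (∑ v, x v ^ k) = 1 ∧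
  ∀ i, Qcomp k E x i = qrad k E * x i ^ (k-1)

open Finset Filter Topology

noncomputable def edgeTerm (k : ℕ) (x : V → ℝ) (e : Finset V) : ℝ :=
  ∑ i ∈ e, x i ^ k + k * ∏ i ∈ e, x i

theorem qform_eq_sum_edgeTerm (k : ℕ) (E : Finset (Finset V)) (x : V → ℝ) :
    qform k E x = ∑ e ∈ E, edgeTerm k x e :=
  rfl

section EdgeTerm

variable {k : ℕ} {x : V → ℝ}

theorem edgeTerm_nonneg (hx : ∀ v, 0 ≤ x v) (e : Finset V) : 0 ≤ edgeTerm k x e :=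
  add_nonneg (sum_nonneg fun i _ => pow_nonneg (hx i) k)
    (mul_nonneg k.cast_nonneg (prod_nonneg fun i _ => hx i))

theorem edgeTerm_le_edgeTerm_insert_erase [DecidableEq V] (hx : ∀ v, 0 ≤ x v) {e : Finset V}
    {u v : V} (hv : v ∈ e) (hu : u ∉ e) (hxu : x v ≤ x u) :
    edgeTerm k x e ≤ edgeTerm k x (insert u (e.erase v)) := by
  have hu' : u ∉ e.erase v := fun h => hu (mem_of_mem_erase h)
  conv_lhs => rw [← insert_erase hv]
  simp only [edgeTerm, sum_insert hu', prod_insert hu', sum_insert (notMem_erase v e),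
    prod_insert (notMem_erase v e)]
  have hP : 0 ≤ ∏ i ∈ e.erase v, x i := prod_nonneg fun i _ => hx i
  gcongr
  exact hx v

end EdgeTerm

theorem card_insert_erase [DecidableEq V] {e : Finset V} {u v : V} (hv : v ∈ e) (hu : u ∉ e) :
    (insert u (e.erase v)).card = e.card := by
  rw [card_insert_of_notMem fun h => hu (mem_of_mem_erase h), card_erase_add_one hv]

section Form

variable {k : ℕ} {E : Finset (Finset V)}

theorem qform_smul (hE : IsUniform k E) (s : ℝ) (x : V → ℝ) :
    qform k E (s • x) = s ^ k * qform k E x := by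
  simp only [qform_eq_sum_edgeTerm, mul_sum]
  refine sum_congr rfl fun e he => ?_
  simp only [edgeTerm, Pi.smul_apply, smul_eq_mul, mul_pow, prod_mul_distrib, prod_const, hE e he,
    mul_add, mul_sum]
  ring

theorem qform_update_add (k : ℕ) (E : Finset (Finset V)) (x : V → ℝ) (u : V) (t : ℝ) :
    qform k E (Function.update x u (x u + t)) = qform k E x
      + degree E u * ((x u + t) ^ k - x u ^ k)
      + k * t * ∑ e ∈ E with u ∈ e, ∏ j ∈ e.erase u, x j := by
  set y := Function.update x u (x u + t)
  have hfar : ∀ e, u ∉ e → edgeTerm k y e = edgeTerm k x e := by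
    intro e hu
    have hyx : ∀ j ∈ e, y j = x j := fun j hj =>
      Function.update_of_ne (ne_of_mem_of_not_mem hj hu) _ _
    simp only [edgeTerm]
    rw [sum_congr rfl fun j hj => congrArg (· ^ k) (hyx j hj), prod_congr rfl hyx]
  have hnear : ∀ e, u ∈ e → edgeTerm k y e =
      edgeTerm k x e + ((x u + t) ^ k - x u ^ k) + k * t * ∏ j ∈ e.erase u, x j := by
    intro e hu
    have hyx : ∀ j ∈ e.erase u, y j = x j := fun j hj =>
      Function.update_of_ne (ne_of_mem_erase hj) _ _
    simp only [edgeTerm]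
    rw [← add_sum_erase e _ hu, ← add_sum_erase e (fun j => x j ^ k) hu, ← mul_prod_erase e _ hu,
      ← mul_prod_erase e x hu, sum_congr rfl fun j hj => congrArg (· ^ k) (hyx j hj),
      prod_congr rfl hyx, show y u = x u + t from Function.update_self ..]
    ring
  simp only [qform_eq_sum_edgeTerm]
  rw [← sum_filter_add_sum_filter_not E (u ∈ ·), ← sum_filter_add_sum_filter_not E (u ∈ ·),
    sum_congr rfl fun e he => hnear e (mem_filter.1 he).2,
    sum_congr rfl fun e he => hfar e (mem_filter.1 he).2, sum_add_distrib, sum_add_distrib,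
    sum_const, nsmul_eq_mul, ← mul_sum, degree]
  ring

end Form

section Qcomp

variable {k : ℕ} {x : V → ℝ}

-- `Qcomp` is elaborated with classical decidability; this restates it for the ambient instance.
theorem Qcomp_eq_sum_filter [DecidableEq V] (k : ℕ) (E : Finset (Finset V)) (x : V → ℝ)
    (i : V) :
    Qcomp k E x i = ∑ e ∈ E with i ∈ e, (x i ^ (k - 1) + ∏ j ∈ e.erase i, x j) := by
  unfold Qcomp
  congr!

theorem Qcomp_eq_degree_mul_add (k : ℕ) (E : Finset (Finset V)) (x : V → ℝ) (i : V) :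
    Qcomp k E x i = degree E i * x i ^ (k - 1) + ∑ e ∈ E with i ∈ e, ∏ j ∈ e.erase i, x j := by
  rw [Qcomp, sum_add_distrib, sum_const, nsmul_eq_mul, degree]

theorem Qcomp_union [DecidableEq V] {E F : Finset (Finset V)} (h : Disjoint E F) (i : V) :
    Qcomp k (E ∪ F) x i = Qcomp k E x i + Qcomp k F x i := by
  simp only [Qcomp_eq_sum_filter, filter_union, sum_union (disjoint_filter_filter h)]

theorem Qcomp_sdiff_of_forall_notMem [DecidableEq V] {E A : Finset (Finset V)} {i : V}
    (h : ∀ e ∈ A, i ∉ e) : Qcomp k (E \ A) x i = Qcomp k E x i := by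
  simp only [Qcomp_eq_sum_filter]
  congr 1
  ext e
  simp only [mem_filter]
  exact ⟨fun ⟨he, hi⟩ => ⟨(mem_sdiff.1 he).1, hi⟩,
    fun ⟨he, hi⟩ => ⟨mem_sdiff.2 ⟨he, fun hA => h e hA hi⟩, hi⟩⟩

theorem Qcomp_pos (hx : ∀ v, 0 < x v) {E : Finset (Finset V)} {e : Finset V} {i : V} (he : e ∈ E)
    (hi : i ∈ e) : 0 < Qcomp k E x i :=
  sum_pos (fun _ _ => add_pos (pow_pos (hx i) _) (prod_pos fun j _ => hx j))
    ⟨e, mem_filter.2 ⟨he, hi⟩⟩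

theorem sum_mul_Qcomp [Fintype V] {E : Finset (Finset V)} (hE : IsUniform k E) (hk : k ≠ 0)
    (x : V → ℝ) : ∑ v, x v * Qcomp k E x v = qform k E x := by
  have hterm : ∀ e, ∀ v ∈ e, x v * (x v ^ (k - 1) + ∏ j ∈ e.erase v, x j) =
      x v ^ k + ∏ j ∈ e, x j := fun e v hv => by
    rw [mul_add, mul_prod_erase e x hv, ← pow_succ', Nat.sub_add_cancel (Nat.pos_of_ne_zero hk)]
  simp only [Qcomp_eq_sum_filter, mul_sum, sum_filter, mul_ite, mul_zero]
  rw [sum_comm, qform_eq_sum_edgeTerm]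
  refine sum_congr rfl fun e he => ?_
  rw [← sum_filter, filter_univ_mem, sum_congr rfl (hterm e), sum_add_distrib, sum_const, hE e he,
    nsmul_eq_mul, edgeTerm]

end Qcomp

section Spectral

variable [Fintype V] {k : ℕ} {E : Finset (Finset V)} {x : V → ℝ}

theorem bddAbove_qform_sphere (hk : k ≠ 0) (E : Finset (Finset V)) :
    BddAbove {r | ∃ x : V → ℝ, (∀ v, 0 ≤ x v) ∧ (∑ v, x v ^ k) = 1 ∧ r = qform k E x} := by
  refine ⟨E.card * (1 + k), ?_⟩
  rintro _ ⟨x, hx, hx1, rfl⟩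
  have hpow_le : ∀ s : Finset V, ∑ i ∈ s, x i ^ k ≤ 1 := fun s =>
    hx1 ▸ sum_le_sum_of_subset_of_nonneg (subset_univ s) fun i _ _ => pow_nonneg (hx i) k
  have hle : ∀ v, x v ≤ 1 := fun v =>
    (pow_le_one_iff_of_nonneg (hx v) hk).1 (by simpa using hpow_le {v})
  have hterm : ∀ e ∈ E, edgeTerm k x e ≤ 1 + k := fun e _ => by
    have hprod : ∏ i ∈ e, x i ≤ 1 := prod_le_one (fun i _ => hx i) fun i _ => hle i
    have := mul_le_mul_of_nonneg_left hprod k.cast_nonneg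
    simp only [edgeTerm]
    linarith [hpow_le e]
  calc qform k E x ≤ ∑ _e ∈ E, ((1 : ℝ) + k) := sum_le_sum hterm
    _ = E.card * (1 + k) := by rw [sum_const, nsmul_eq_mul]

theorem qform_le_qrad (hk : k ≠ 0) (E : Finset (Finset V)) {x : V → ℝ} (hx : ∀ v, 0 ≤ x v)
    (hx1 : ∑ v, x v ^ k = 1) : qform k E x ≤ qrad k E :=
  le_csSup (bddAbove_qform_sphere hk E) ⟨x, hx, hx1, rfl⟩

theorem qform_le_qrad_mul_sum_pow (hE : IsUniform k E) (hk : k ≠ 0) {x : V → ℝ}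
    (hx : ∀ v, 0 ≤ x v) (hN : 0 < ∑ v, x v ^ k) :
    qform k E x ≤ qrad k E * ∑ v, x v ^ k := by
  set N := ∑ v, x v ^ k
  set s := N ^ (-(k : ℝ)⁻¹)
  have hsk : s ^ k = N⁻¹ := by
    rw [← Real.rpow_natCast, ← Real.rpow_mul hN.le, neg_mul,
      inv_mul_cancel₀ (Nat.cast_ne_zero.2 hk), Real.rpow_neg_one]
  have hs : 0 ≤ s := Real.rpow_nonneg hN.le _
  have hsx1 : ∑ v, (s • x) v ^ k = 1 := by
    simp only [Pi.smul_apply, smul_eq_mul, mul_pow, ← mul_sum, hsk]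
    exact inv_mul_cancel₀ hN.ne'
  have := qform_le_qrad hk E (x := s • x) (fun v => mul_nonneg hs (hx v)) hsx1
  rwa [qform_smul hE, hsk, inv_mul_le_iff₀ hN, mul_comm] at this

theorem IsPrincipalEig.qform_eq (hx : IsPrincipalEig k E x) (hE : IsUniform k E) (hk : k ≠ 0) :
    qform k E x = qrad k E := by
  obtain ⟨-, hsum, heig⟩ := hx
  rw [← sum_mul_Qcomp hE hk, ← mul_one (qrad k E), ← hsum, mul_sum]
  refine sum_congr rfl fun v _ => ?_
  rw [heig, mul_left_comm, ← pow_succ', Nat.sub_add_cancel (Nat.pos_of_ne_zero hk)]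

theorem exists_pos_mul_pow_lt {a b c : ℝ} (n : ℕ) (h : c * a ^ n < b) :
    ∃ t > 0, c * (a + t) ^ n < b := by
  have hlim : Tendsto (fun t => c * (a + t) ^ n) (𝓝[>] 0) (𝓝 (c * a ^ n)) := by
    have hcont : Continuous fun t : ℝ => c * (a + t) ^ n := by fun_prop
    simpa using (hcont.tendsto 0).mono_left nhdsWithin_le_nhds
  obtain ⟨t, htb, ht⟩ := ((hlim.eventually_lt_const h).and self_mem_nhdsWithin).exists
  exact ⟨t, ht, htb⟩

/-- Write `(Q x^{k-1})_u = d x_u^{k-1} + P` with `d` the degree of `u`. Raising `x_u` by `t > 0`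
raises the form by `d δ + k t P` and `∑ x_v^k` by `δ = (x_u + t)^k - x_u^k ≤ k t (x_u + t)^{k-1}`,
so for small `t` the gain beats the cost `c δ` of renormalising. -/
theorem lt_qrad_of_mul_pow_lt_Qcomp (hE : IsUniform k E) (hk : k ≠ 0) (hx : ∀ v, 0 ≤ x v)
    (hsum : ∑ v, x v ^ k = 1) {c : ℝ} (hc : c ≤ qform k E x) {u : V}
    (hu : c * x u ^ (k - 1) < Qcomp k E x u) : c < qrad k E := by
  set d : ℝ := (degree E u : ℝ)
  set P := ∑ e ∈ E with u ∈ e, ∏ j ∈ e.erase u, x j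
  have hP : 0 ≤ P := sum_nonneg fun e _ => prod_nonneg fun j _ => hx j
  rw [Qcomp_eq_degree_mul_add] at hu
  obtain ⟨t, ht, htP⟩ :=
    exists_pos_mul_pow_lt (a := x u) (c := c - d) (b := P) (k - 1) (by linarith)
  set δ := (x u + t) ^ k - x u ^ k
  have hδ : 0 < δ := sub_pos.2 (pow_lt_pow_left₀ (by linarith) (hx u) hk)
  have hδle : δ ≤ t * k * (x u + t) ^ (k - 1) := by
    refine (le_abs_self δ).trans ?_
    simpa [abs_of_pos ht, abs_of_nonneg (hx u), abs_of_nonneg (add_nonneg (hx u) ht.le), ht.le]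
      using abs_pow_sub_pow_le (x u + t) (x u) k
  have hgain : (c - d) * δ < k * t * P := by
    rcases lt_or_ge (c - d) 0 with hcd | hcd
    · exact (mul_neg_of_neg_of_pos hcd hδ).trans_le (mul_nonneg (by positivity) hP)
    · calc (c - d) * δ ≤ (c - d) * (t * k * (x u + t) ^ (k - 1)) :=
            mul_le_mul_of_nonneg_left hδle hcd
        _ = k * t * ((c - d) * (x u + t) ^ (k - 1)) := by ring
        _ < k * t * P := mul_lt_mul_of_pos_left htP (by positivity)
  set y := Function.update x u (x u + t)
  have hy : ∀ v, 0 ≤ y v := by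
    intro v
    rcases eq_or_ne v u with rfl | hv
    · simpa [y] using add_nonneg (hx v) ht.le
    · simpa [y, hv] using hx v
  have hysum : ∑ v, y v ^ k = 1 + δ := by
    rw [← hsum, ← add_sum_erase _ _ (mem_univ u),
      ← add_sum_erase _ (fun v => x v ^ k) (mem_univ u),
      sum_congr rfl fun v hv => congrArg (· ^ k) (Function.update_of_ne (ne_of_mem_erase hv) _ _)]
    simp only [y, Function.update_self, δ]
    ring
  have hqy := qform_le_qrad_mul_sum_pow hE hk hy (by rw [hysum]; linarith)
  rw [hysum, qform_update_add] at hqy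
  have hscaled : c * (1 + δ) < qrad k E * (1 + δ) := by linarith
  exact lt_of_mul_lt_mul_right hscaled (by linarith)

end Spectral

section Replace

variable [DecidableEq V] {k : ℕ} {E A A' : Finset (Finset V)}

theorem IsUniform.sdiff_union (hE : IsUniform k E) (hA' : IsUniform k A') :
    IsUniform k (E \ A ∪ A') := by
  intro e he
  rcases mem_union.1 he with he | he
  · exact hE e (mem_sdiff.1 he).1
  · exact hA' e he

theorem qform_sdiff_union_add (k : ℕ) (x : V → ℝ) (hA : A ⊆ E) (hA' : Disjoint E A') :
    qform k (E \ A ∪ A') x + qform k A x = qform k E x + qform k A' x := by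
  simp only [qform_eq_sum_edgeTerm]
  rw [sum_union (disjoint_of_subset_left sdiff_subset hA'), add_right_comm, sum_sdiff hA]

end Replace

theorem moving_edges_qrad_general (k r : ℕ) (hr : 1 ≤ r) {V : Type*} [Fintype V] [DecidableEq V]
    (E : Finset (Finset V)) (hu : IsUniform k E)
    (u : V) (es : Fin r → Finset V) (vs : Fin r → V)
    (hesE : ∀ i, es i ∈ E)
    (hvs : ∀ i, vs i ∈ es i) (hnu : ∀ i, u ∉ es i)
    (es' : Fin r → Finset V) (hes' : ∀ i, es' i = insert u ((es i).erase (vs i)))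
    (hinj' : Function.Injective es') (hnew : ∀ i, es' i ∉ E)
    (E' : Finset (Finset V))
    (hE' : E' = (E \ Finset.image es Finset.univ) ∪ Finset.image es' Finset.univ)
    (x : V → ℝ) (hx : IsPrincipalEig k E x)
    (hxu : ∀ i, x (vs i) ≤ x u) :
    qrad k E < qrad k E' := by
  have hx0 : ∀ v, 0 ≤ x v := fun v => (hx.1 v).le
  have hk : k ≠ 0 := by
    have := hu _ (hesE ⟨0, hr⟩)
    have := card_pos.2 ⟨_, hvs ⟨0, hr⟩⟩
    omega
  have hAE : image es univ ⊆ E := image_subset_iff.2 fun i _ => hesE i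
  have hA'E : Disjoint E (image es' univ) := disjoint_right.2 <| by simpa using hnew
  have hA' : IsUniform k (image es' univ) := by
    simpa [IsUniform, hes', card_insert_erase (hvs _) (hnu _)] using fun i => hu _ (hesE i)
  have hmove : qform k (image es univ) x ≤ qform k (image es' univ) x := calc
    _ ≤ ∑ i, edgeTerm k x (es i) := sum_image_le_of_nonneg fun e _ => edgeTerm_nonneg hx0 e
    _ ≤ ∑ i, edgeTerm k x (es' i) := sum_le_sum fun i _ =>
        hes' i ▸ edgeTerm_le_edgeTerm_insert_erase hx0 (hvs i) (hnu i) (hxu i)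
    _ = _ := (sum_image fun i _ j _ h => hinj' h).symm
  have hgain : 0 < Qcomp k (image es' univ) x u :=
    Qcomp_pos hx.1 (mem_image_of_mem es' (mem_univ ⟨0, hr⟩)) (hes' _ ▸ mem_insert_self u _)
  subst hE'
  refine lt_qrad_of_mul_pow_lt_Qcomp (hu.sdiff_union hA') hk hx0 hx.2.1 (u := u) ?_ ?_
  · linarith [qform_sdiff_union_add k x hAE hA'E, hx.qform_eq hu hk]
  · rw [← hx.2.2 u, Qcomp_union (disjoint_of_subset_left sdiff_subset hA'E),
      Qcomp_sdiff_of_forall_notMem (by simpa using hnu)]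
    linarith

/-- the moving-edges lemma: if `x_u ≥ max x_{v_i}`, then moving the edges
`e_1,…,e_r` from `v_1,…,v_r` to `u` strictly increases the signless Laplacian
spectral radius. -/
theorem moving_edges_qrad (k r : ℕ) (hr : 1 ≤ r) {V : Type*} [Fintype V] [DecidableEq V]
    (E : Finset (Finset V)) (hu : IsUniform k E) (hc : HConnected E)
    (u : V) (es : Fin r → Finset V) (vs : Fin r → V)
    (hesE : ∀ i, es i ∈ E) (hinj : Function.Injective es)
    (hvs : ∀ i, vs i ∈ es i) (hnu : ∀ i, u ∉ es i)
    (es' : Fin r → Finset V) (hes' : ∀ i, es' i = insert u ((es i).erase (vs i)))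
    (hinj' : Function.Injective es') (hnew : ∀ i, es' i ∉ E)
    (E' : Finset (Finset V))
    (hE' : E' = (E \ Finset.image es Finset.univ) ∪ Finset.image es' Finset.univ)
    (x : V → ℝ) (hx : IsPrincipalEig k E x)
    (hxu : ∀ i, x (vs i) ≤ x u) :
    qrad k E < qrad k E' :=
  moving_edges_qrad_general k r hr E hu u es vs hesE hvs hnu es' hes' hinj' hnew E' hE' x hx hxu

end SLT
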